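/- arXiv:2005.04924 — 2 statements merged into one kernel-verified Lean document; each statement's English description precedes it below -/
import Mathlib

section
/- Let j be an element of SO(7) with j² = Id and j ≠ Id. Then j is diagonalizable over ℝ with eigenvalues ±1, and if additionally j preserves a G₂ structure (i.e., the standard 3-form φ₀ on ℝ⁷), then the +1-eigenspace has dimension 3 and the −1-eigenspace has dimension 4. -/
set_option synthInstance.maxHeartbeats 1000000
set_option maxHeartbeats 1000000

/-- The wedge `vⁱ ∧ vʲ ∧ vᵏ` of dual standard basis covectors on `ℝ⁷`,
evaluated on three vectors. -/
def triForm (i j k : Fin 7) (x y z : Fin 7 → ℝ) : ℝ :=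
  x i * (y j * z k - y k * z j) - x j * (y i * z k - y k * z i)
    + x k * (y i * z j - y j * z i)

/-- The standard G₂ 3-form `φ₀ = v¹²⁷ + v³⁴⁷ + v⁵⁶⁷ + v¹³⁵ − v²³⁶ − v¹⁴⁶ − v²⁴⁵` on `ℝ⁷`
(with 0-based indices). -/
def phi0 (x y z : Fin 7 → ℝ) : ℝ :=
  triForm 0 1 6 x y z + triForm 2 3 6 x y z + triForm 4 5 6 x y z + triForm 0 2 4 x y z
    - triForm 1 2 5 x y z - triForm 0 3 5 x y z - triForm 1 3 4 x y z

/-- The 7-dimensional cross product associated with `phi0`. -/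
def cross (x y : Fin 7 → ℝ) : Fin 7 → ℝ :=
  ![ (x 1*y 6 - x 6*y 1) + (x 2*y 4 - x 4*y 2) - (x 3*y 5 - x 5*y 3),
     (x 6*y 0 - x 0*y 6) - (x 2*y 5 - x 5*y 2) - (x 3*y 4 - x 4*y 3),
     (x 3*y 6 - x 6*y 3) + (x 4*y 0 - x 0*y 4) - (x 5*y 1 - x 1*y 5),
     (x 6*y 2 - x 2*y 6) - (x 5*y 0 - x 0*y 5) - (x 4*y 1 - x 1*y 4),
     (x 5*y 6 - x 6*y 5) + (x 0*y 2 - x 2*y 0) - (x 1*y 3 - x 3*y 1),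
     (x 6*y 4 - x 4*y 6) - (x 1*y 2 - x 2*y 1) - (x 0*y 3 - x 3*y 0),
     (x 0*y 1 - x 1*y 0) + (x 2*y 3 - x 3*y 2) + (x 4*y 5 - x 5*y 4) ]

lemma cross0 (x y : Fin 7 → ℝ) : cross x y 0 = (x 1*y 6 - x 6*y 1) + (x 2*y 4 - x 4*y 2) - (x 3*y 5 - x 5*y 3) := rfl
lemma cross1 (x y : Fin 7 → ℝ) : cross x y 1 = (x 6*y 0 - x 0*y 6) - (x 2*y 5 - x 5*y 2) - (x 3*y 4 - x 4*y 3) := rfl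
lemma cross2 (x y : Fin 7 → ℝ) : cross x y 2 = (x 3*y 6 - x 6*y 3) + (x 4*y 0 - x 0*y 4) - (x 5*y 1 - x 1*y 5) := rfl
lemma cross3 (x y : Fin 7 → ℝ) : cross x y 3 = (x 6*y 2 - x 2*y 6) - (x 5*y 0 - x 0*y 5) - (x 4*y 1 - x 1*y 4) := rfl
lemma cross4 (x y : Fin 7 → ℝ) : cross x y 4 = (x 5*y 6 - x 6*y 5) + (x 0*y 2 - x 2*y 0) - (x 1*y 3 - x 3*y 1) := rfl
lemma cross5 (x y : Fin 7 → ℝ) : cross x y 5 = (x 6*y 4 - x 4*y 6) - (x 1*y 2 - x 2*y 1) - (x 0*y 3 - x 3*y 0) := rfl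
lemma cross6 (x y : Fin 7 → ℝ) : cross x y 6 = (x 0*y 1 - x 1*y 0) + (x 2*y 3 - x 3*y 2) + (x 4*y 5 - x 5*y 4) := rfl

lemma funext7 {a b : Fin 7 → ℝ} (h0 : a 0 = b 0) (h1 : a 1 = b 1) (h2 : a 2 = b 2)
    (h3 : a 3 = b 3) (h4 : a 4 = b 4) (h5 : a 5 = b 5) (h6 : a 6 = b 6) : a = b := by
  funext i
  fin_cases i <;>
    first | exact h0 | exact h1 | exact h2 | exact h3 | exact h4 | exact h5 | exact h6

lemma cross_dot (x y z : Fin 7 → ℝ) : dotProduct (cross x y) z = phi0 x y z := by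
  simp only [dotProduct, Fin.sum_univ_seven, cross0, cross1, cross2, cross3, cross4,
    cross5, cross6, phi0, triForm]
  ring

lemma cross_self_dot (x y : Fin 7 → ℝ) :
    dotProduct (cross x y) (cross x y) =
      dotProduct x x * dotProduct y y - (dotProduct x y)^2 := by
  simp only [dotProduct, Fin.sum_univ_seven, cross0, cross1, cross2, cross3, cross4,
    cross5, cross6]
  ring

lemma cross_add_left (x x' y : Fin 7 → ℝ) : cross (x + x') y = cross x y + cross x' y := by
  apply funext7 <;>
    simp only [Pi.add_apply, cross0, cross1, cross2, cross3, cross4, cross5, cross6] <;> ring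

lemma cross_smul_left (c : ℝ) (x y : Fin 7 → ℝ) : cross (c • x) y = c • cross x y := by
  apply funext7 <;>
    simp only [Pi.smul_apply, smul_eq_mul, cross0, cross1, cross2, cross3, cross4, cross5,
      cross6] <;> ring

lemma cross_add_right (x y y' : Fin 7 → ℝ) : cross x (y + y') = cross x y + cross x y' := by
  apply funext7 <;>
    simp only [Pi.add_apply, cross0, cross1, cross2, cross3, cross4, cross5, cross6] <;> ring

lemma cross_smul_right (c : ℝ) (x y : Fin 7 → ℝ) : cross x (c • y) = c • cross x y := by
  apply funext7 <;>
    simp only [Pi.smul_apply, smul_eq_mul, cross0, cross1, cross2, cross3, cross4, cross5,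
      cross6] <;> ring

lemma cross_neg_neg (x y : Fin 7 → ℝ) : cross (-x) (-y) = cross x y := by
  have : (-x) = (-1 : ℝ) • x := by funext i; simp
  have h2 : (-y) = (-1 : ℝ) • y := by funext i; simp
  rw [this, h2, cross_smul_left, cross_smul_right, smul_smul]
  norm_num

lemma eq_of_dot {a b : Fin 7 → ℝ} (h : ∀ z, dotProduct a z = dotProduct b z) :
    a = b := by
  funext i
  have := h (Pi.single i 1)
  simpa [dotProduct_single] using this

/-- `v ↦ cross a v` as a linear map. -/
def crossL (a : Fin 7 → ℝ) : (Fin 7 → ℝ) →ₗ[ℝ] (Fin 7 → ℝ) where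
  toFun := cross a
  map_add' := cross_add_right a
  map_smul' c v := cross_smul_right c a v

/-- `v ↦ cross v a` as a linear map. -/
def crossR (a : Fin 7 → ℝ) : (Fin 7 → ℝ) →ₗ[ℝ] (Fin 7 → ℝ) where
  toFun v := cross v a
  map_add' x x' := cross_add_left x x' a
  map_smul' c v := cross_smul_left c v a

/-- the linear functional `v ↦ a ⬝ᵥ v`. -/
def dotL (a : Fin 7 → ℝ) : (Fin 7 → ℝ) →ₗ[ℝ] ℝ where
  toFun v := dotProduct a v
  map_add' x x' := dotProduct_add a x x'
  map_smul' c v := by simp [dotProduct_smul]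

/-- An element `j ∈ SO(7)` with `j² = Id`, `j ≠ Id` is diagonalizable with eigenvalues `±1`,
and if moreover `j` preserves the standard G₂ 3-form `φ₀`, then its `+1`-eigenspace has
dimension `3` and its `−1`-eigenspace has dimension `4`. -/
theorem so7_involution_eigenspaces
    (j : Matrix (Fin 7) (Fin 7) ℝ)
    (horth : j.transpose * j = 1) (hdet : j.det = 1)
    (hsq : j * j = 1) (hne : j ≠ 1) :
    (Module.End.eigenspace (Matrix.toLin' j) 1 ⊔
        Module.End.eigenspace (Matrix.toLin' j) (-1) = ⊤) ∧
    ((∀ x y z : Fin 7 → ℝ,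
        phi0 (j.mulVec x) (j.mulVec y) (j.mulVec z) = phi0 x y z) →
      Module.finrank ℝ (Module.End.eigenspace (Matrix.toLin' j) 1) = 3 ∧
      Module.finrank ℝ (Module.End.eigenspace (Matrix.toLin' j) (-1)) = 4) := by
  set E₁ := Module.End.eigenspace (Matrix.toLin' j) 1 with hE₁
  set Em := Module.End.eigenspace (Matrix.toLin' j) (-1) with hEm
  have hjj : ∀ v : Fin 7 → ℝ, j.mulVec (j.mulVec v) = v := by
    intro v
    rw [Matrix.mulVec_mulVec, hsq, Matrix.one_mulVec]
  have hmem1 : ∀ v : Fin 7 → ℝ, v ∈ E₁ ↔ j.mulVec v = v := by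
    intro v
    rw [hE₁, Module.End.mem_eigenspace_iff, Matrix.toLin'_apply, one_smul]
  have hmemm : ∀ v : Fin 7 → ℝ, v ∈ Em ↔ j.mulVec v = -v := by
    intro v
    rw [hEm, Module.End.mem_eigenspace_iff, Matrix.toLin'_apply, neg_one_smul]
  -- Part 1 : the eigenspaces span
  have hsup : E₁ ⊔ Em = ⊤ := by
    rw [eq_top_iff]
    intro x _
    have ha : (1/2 : ℝ) • (x + j.mulVec x) ∈ E₁ := by
      rw [hmem1, Matrix.mulVec_smul, Matrix.mulVec_add, hjj]
      rw [add_comm (j.mulVec x) x]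
    have hb : (1/2 : ℝ) • (x - j.mulVec x) ∈ Em := by
      rw [hmemm, Matrix.mulVec_smul, Matrix.mulVec_sub, hjj]
      rw [← smul_neg, neg_sub]
    have hx : (1/2 : ℝ) • (x + j.mulVec x) + (1/2 : ℝ) • (x - j.mulVec x) = x := by
      module
    exact hx ▸ Submodule.add_mem_sup ha hb
  refine ⟨hsup, ?_⟩
  intro hphi
  -- transpose of j is j
  have hjt : j.transpose = j := by
    calc j.transpose = j.transpose * (j * j) := by rw [hsq, mul_one]
      _ = (j.transpose * j) * j := by rw [mul_assoc]
      _ = j := by rw [horth, one_mul]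
  -- j preserves the dot product
  have hdotj : ∀ x y : Fin 7 → ℝ,
      dotProduct (j.mulVec x) (j.mulVec y) = dotProduct x y := by
    intro x y
    rw [Matrix.dotProduct_mulVec, ← Matrix.mulVec_transpose, Matrix.mulVec_mulVec, hjt, hsq,
      Matrix.one_mulVec]
  -- dot with y of j-image
  have hdotj' : ∀ x y : Fin 7 → ℝ,
      dotProduct (j.mulVec x) y = dotProduct x (j.mulVec y) := by
    intro x y
    conv_lhs => rw [← hjj y]
    rw [hdotj]
  -- the eigenspaces are orthogonal
  have horthEE : ∀ u v : Fin 7 → ℝ, u ∈ E₁ → v ∈ Em → dotProduct u v = 0 := by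
    intro u v hu hv
    have h1 : dotProduct u v = dotProduct u (-v) := by
      conv_lhs => rw [← hdotj u v, (hmem1 u).1 hu, (hmemm v).1 hv]
    rw [dotProduct_neg] at h1
    linarith
  -- j is cross-product equivariant
  have hcrossj : ∀ x y : Fin 7 → ℝ,
      j.mulVec (cross x y) = cross (j.mulVec x) (j.mulVec y) := by
    intro x y
    apply eq_of_dot
    intro z
    rw [hdotj', cross_dot, cross_dot]
    have := hphi (j.mulVec x) (j.mulVec y) z
    rw [hjj, hjj] at this
    exact this
  -- a nonzero element of the (-1)-eigenspace
  obtain ⟨w, hw⟩ : ∃ w : Fin 7 → ℝ, j.mulVec w ≠ w := by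
    by_contra h
    push_neg at h
    apply hne
    apply Matrix.toLin'.injective
    apply LinearMap.ext
    intro v
    rw [Matrix.toLin'_apply, Matrix.toLin'_one, LinearMap.id_apply, h]
  set x₀ : Fin 7 → ℝ := j.mulVec w - w with hx₀def
  have hx₀mem : x₀ ∈ Em := by
    rw [hmemm, hx₀def, Matrix.mulVec_sub, hjj, neg_sub]
  have hx₀ne : x₀ ≠ 0 := by
    rw [hx₀def, sub_ne_zero]
    exact hw
  have hx₀dot : dotProduct x₀ x₀ ≠ 0 := by
    intro h
    exact hx₀ne (dotProduct_self_eq_zero.mp h)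
  -- useful : vanishing of self dot product
  have hself : ∀ v : Fin 7 → ℝ, dotProduct v v = 0 → v = 0 := by
    intro v h
    exact dotProduct_self_eq_zero.mp h
  -- map E₁ → Em : z ↦ cross z x₀, injective
  have hmapΦ : ∀ z : Fin 7 → ℝ, z ∈ E₁ → cross z x₀ ∈ Em := by
    intro z hz
    rw [hmemm, hcrossj, (hmem1 z).1 hz, (hmemm x₀).1 hx₀mem]
    have : (-x₀ : Fin 7 → ℝ) = (-1 : ℝ) • x₀ := by funext i; simp
    rw [this, cross_smul_right, neg_one_smul]
  let Φ : E₁ →ₗ[ℝ] Em := ((crossR x₀).comp E₁.subtype).codRestrict Em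
    (fun z => hmapΦ z.1 z.2)
  have hΦinj : Function.Injective Φ := by
    rw [← LinearMap.ker_eq_bot, LinearMap.ker_eq_bot']
    intro z hz
    have h0 : cross z.1 x₀ = 0 := by
      have := congrArg (Subtype.val) hz
      simpa [Φ, crossR, LinearMap.codRestrict] using this
    have hds := cross_self_dot z.1 x₀
    rw [h0] at hds
    rw [horthEE z.1 x₀ z.2 hx₀mem] at hds
    simp only [zero_dotProduct] at hds
    have hz0 : dotProduct z.1 z.1 = 0 := by
      rcases mul_eq_zero.mp (by linarith : dotProduct z.1 z.1 * dotProduct x₀ x₀ = 0) with h | h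
      · exact h
      · exact absurd h hx₀dot
    exact Subtype.ext (hself z.1 hz0)
  have hd_le_e : Module.finrank ℝ E₁ ≤ Module.finrank ℝ Em :=
    LinearMap.finrank_le_finrank_of_injective hΦinj
  -- the whole space has dimension 7
  have h7 : Module.finrank ℝ (Fin 7 → ℝ) = 7 := by
    simp [Module.finrank_fin_fun]
  -- K : elements of Em orthogonal to x₀
  set K : Submodule ℝ (Fin 7 → ℝ) := Em ⊓ LinearMap.ker (dotL x₀) with hKdef
  have hmapΨ : ∀ y : Fin 7 → ℝ, y ∈ Em → cross x₀ y ∈ E₁ := by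
    intro y hy
    rw [hmem1, hcrossj, (hmemm y).1 hy, (hmemm x₀).1 hx₀mem, cross_neg_neg]
  let Ψ : K →ₗ[ℝ] E₁ := ((crossL x₀).comp K.subtype).codRestrict E₁
    (fun y => hmapΨ y.1 y.2.1)
  have hΨinj : Function.Injective Ψ := by
    rw [← LinearMap.ker_eq_bot, LinearMap.ker_eq_bot']
    intro y hy
    have h0 : cross x₀ y.1 = 0 := by
      have := congrArg (Subtype.val) hy
      simpa [Ψ, crossL, LinearMap.codRestrict] using this
    have hyK : dotProduct x₀ y.1 = 0 := y.2.2
    have hds := cross_self_dot x₀ y.1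
    rw [h0, hyK] at hds
    simp only [zero_dotProduct] at hds
    have hy0 : dotProduct y.1 y.1 = 0 := by
      rcases mul_eq_zero.mp (by linarith : dotProduct x₀ x₀ * dotProduct y.1 y.1 = 0) with h | h
      · exact absurd h hx₀dot
      · exact h
    exact Subtype.ext (hself y.1 hy0)
  have hK_le_d : Module.finrank ℝ K ≤ Module.finrank ℝ E₁ :=
    LinearMap.finrank_le_finrank_of_injective hΨinj
  -- K has dimension at least (finrank Em) - 1
  have hrankdot : Module.finrank ℝ (LinearMap.range (dotL x₀)) +
      Module.finrank ℝ (LinearMap.ker (dotL x₀)) = 7 := by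
    have := LinearMap.finrank_range_add_finrank_ker (dotL x₀)
    rw [h7] at this
    exact this
  have hrange1 : Module.finrank ℝ (LinearMap.range (dotL x₀)) ≤ 1 := by
    have := Submodule.finrank_le (LinearMap.range (dotL x₀))
    simpa using this
  have hsupK : Module.finrank ℝ (Em ⊔ LinearMap.ker (dotL x₀) : Submodule ℝ (Fin 7 → ℝ)) ≤ 7 := by
    have := Submodule.finrank_le (Em ⊔ LinearMap.ker (dotL x₀) : Submodule ℝ (Fin 7 → ℝ))
    rw [h7] at this
    exact this
  have hKrank : Module.finrank ℝ (Em ⊔ LinearMap.ker (dotL x₀) : Submodule ℝ (Fin 7 → ℝ)) +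
      Module.finrank ℝ K = Module.finrank ℝ Em + Module.finrank ℝ (LinearMap.ker (dotL x₀)) := by
    rw [hKdef]
    exact Submodule.finrank_sup_add_finrank_inf_eq Em (LinearMap.ker (dotL x₀))
  -- dimension count
  have hinf : E₁ ⊓ Em = ⊥ := by
    rw [eq_bot_iff]
    intro v hv
    have h1 := (hmem1 v).1 hv.1
    have h2 := (hmemm v).1 hv.2
    rw [h1] at h2
    have hv2 : (2 : ℝ) • v = 0 := by
      rw [two_smul]
      nth_rewrite 1 [h2]
      simp
    have : v = 0 := (smul_eq_zero.mp hv2).resolve_left (by norm_num)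
    simp [this]
  have hdim7 : Module.finrank ℝ E₁ + Module.finrank ℝ Em = 7 := by
    have := Submodule.finrank_sup_add_finrank_inf_eq E₁ Em
    rw [hsup, hinf] at this
    simp only [finrank_top, finrank_bot, add_zero] at this
    rw [← this]
    simp [Module.finrank_fin_fun]
  have hfinal : Module.finrank ℝ E₁ = 3 ∧ Module.finrank ℝ Em = 4 := by
    omega
  exact hfinal
end

section
/- Let j ∈ G₂ be an involution with j ≠ Id, let V₁ be its +1-eigenspace (of dimension 3), and let × be the cross product on ℝ⁷ determined by φ₀ and the standard inner product via φ₀(u,v,w) = ⟨u×v, w⟩. If (v₁,v₂,v₃) is an orthonormal basis of V₁, then v₁ × v₂ = ±v₃ and φ₀(v₁,v₂,v₃) = ±1. -/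
/-- The standard inner product on `ℝ⁷`. -/
def dot7 (x y : Fin 7 → ℝ) : ℝ := ∑ i, x i * y i

/-- The cross product on `ℝ⁷` determined by `φ₀(u,v,w) = ⟨u × v, w⟩`. -/
def cross7 (u v : Fin 7 → ℝ) : Fin 7 → ℝ := fun i => phi0 u v (Pi.single i 1)

section lemmas
variable (a b d z x y : Fin 7 → ℝ) (r : ℝ)

lemma phi0_swap12 : phi0 a b d = -phi0 b a d := by simp only [phi0, triForm]; ring
lemma phi0_swap23 : phi0 a b d = -phi0 a d b := by simp only [phi0, triForm]; ring
lemma phi0_cyc : phi0 a b d = phi0 b d a := by simp only [phi0, triForm]; ring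
lemma phi0_self12 : phi0 a a d = 0 := by simp only [phi0, triForm]; ring
lemma phi0_self23 : phi0 a d d = 0 := by simp only [phi0, triForm]; ring
lemma phi0_neg3 : phi0 a b (-d) = -phi0 a b d := by
  simp only [phi0, triForm, Pi.neg_apply]; ring
lemma phi0_add2 : phi0 a (x + y) d = phi0 a x d + phi0 a y d := by
  simp only [phi0, triForm, Pi.add_apply]; ring
lemma phi0_add1 : phi0 (x + y) b d = phi0 x b d + phi0 y b d := by
  simp only [phi0, triForm, Pi.add_apply]; ring
lemma phi0_add3 : phi0 a b (x + y) = phi0 a b x + phi0 a b y := by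
  simp only [phi0, triForm, Pi.add_apply]; ring
lemma phi0_smul2 : phi0 a (r • x) d = r * phi0 a x d := by
  simp only [phi0, triForm, Pi.smul_apply, smul_eq_mul]; ring
lemma phi0_smul1 : phi0 (r • x) b d = r * phi0 x b d := by
  simp only [phi0, triForm, Pi.smul_apply, smul_eq_mul]; ring
lemma phi0_smul3 : phi0 a b (r • x) = r * phi0 a b x := by
  simp only [phi0, triForm, Pi.smul_apply, smul_eq_mul]; ring

lemma dot7_comm : dot7 a b = dot7 b a := by
  simp only [dot7, Fin.sum_univ_seven]; ring
lemma dot7_add_left : dot7 (x + y) b = dot7 x b + dot7 y b := by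
  simp only [dot7, Fin.sum_univ_seven, Pi.add_apply]; ring
lemma dot7_add_right : dot7 a (x + y) = dot7 a x + dot7 a y := by
  simp only [dot7, Fin.sum_univ_seven, Pi.add_apply]; ring
lemma dot7_smul_left : dot7 (r • x) b = r * dot7 x b := by
  simp only [dot7, Fin.sum_univ_seven, Pi.smul_apply, smul_eq_mul]; ring
lemma dot7_smul_right : dot7 a (r • x) = r * dot7 a x := by
  simp only [dot7, Fin.sum_univ_seven, Pi.smul_apply, smul_eq_mul]; ring
lemma dot7_neg_right : dot7 a (-x) = -dot7 a x := by
  simp only [dot7, Fin.sum_univ_seven, Pi.neg_apply]; ring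
lemma dot7_sub_right : dot7 a (x - y) = dot7 a x - dot7 a y := by
  simp only [dot7, Fin.sum_univ_seven, Pi.sub_apply]; ring
lemma dot7_zero_right : dot7 a 0 = 0 := by
  simp [dot7]

lemma eq_zero_of_dot7_self (h : dot7 a a = 0) : a = 0 := by
  simp only [dot7, Fin.sum_univ_seven] at h
  have n0 := mul_self_nonneg (a 0); have n1 := mul_self_nonneg (a 1)
  have n2 := mul_self_nonneg (a 2); have n3 := mul_self_nonneg (a 3)
  have n4 := mul_self_nonneg (a 4); have n5 := mul_self_nonneg (a 5)
  have n6 := mul_self_nonneg (a 6)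
  have h0 : a 0 = 0 := by nlinarith
  have h1 : a 1 = 0 := by nlinarith
  have h2 : a 2 = 0 := by nlinarith
  have h3 : a 3 = 0 := by nlinarith
  have h4 : a 4 = 0 := by nlinarith
  have h5 : a 5 = 0 := by nlinarith
  have h6 : a 6 = 0 := by nlinarith
  funext i
  fin_cases i <;> simp only [Pi.zero_apply] <;>
    first | exact h0 | exact h1 | exact h2 | exact h3 | exact h4 | exact h5 | exact h6

-- cross7 linearity (componentwise via phi0 lemmas)
lemma cross7_anticomm : cross7 a b = -cross7 b a := by
  funext i; simpa [cross7, Pi.neg_apply] using phi0_swap12 a b (Pi.single i 1)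
lemma cross7_add_right : cross7 a (x + y) = cross7 a x + cross7 a y := by
  funext i; simpa [cross7] using phi0_add2 a (Pi.single i 1) x y
lemma cross7_add_left : cross7 (x + y) b = cross7 x b + cross7 y b := by
  funext i; simpa [cross7] using phi0_add1 b (Pi.single i 1) x y
lemma cross7_smul_right : cross7 a (r • x) = r • cross7 a x := by
  funext i; simpa [cross7] using phi0_smul2 a (Pi.single i 1) x r
lemma cross7_smul_left : cross7 (r • x) b = r • cross7 x b := by
  funext i; simpa [cross7] using phi0_smul1 b (Pi.single i 1) x r
end lemmas

lemma cross7_apply_0 (u v : Fin 7 → ℝ) : cross7 u v 0 = u 1 * v 6 - u 6 * v 1 + u 2 * v 4 - u 4 * v 2 - u 3 * v 5 + u 5 * v 3 := by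
  simp [cross7, phi0, triForm, Pi.single_apply]; ring
lemma cross7_apply_1 (u v : Fin 7 → ℝ) : cross7 u v 1 = - u 0 * v 6 + u 6 * v 0 - u 2 * v 5 + u 5 * v 2 - u 3 * v 4 + u 4 * v 3 := by
  simp [cross7, phi0, triForm, Pi.single_apply]; ring
lemma cross7_apply_2 (u v : Fin 7 → ℝ) : cross7 u v 2 = u 3 * v 6 - u 6 * v 3 - u 0 * v 4 + u 4 * v 0 + u 1 * v 5 - u 5 * v 1 := by
  simp [cross7, phi0, triForm, Pi.single_apply]; ring
lemma cross7_apply_3 (u v : Fin 7 → ℝ) : cross7 u v 3 = - u 2 * v 6 + u 6 * v 2 + u 0 * v 5 - u 5 * v 0 + u 1 * v 4 - u 4 * v 1 := by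
  simp [cross7, phi0, triForm, Pi.single_apply]; ring
lemma cross7_apply_4 (u v : Fin 7 → ℝ) : cross7 u v 4 = u 5 * v 6 - u 6 * v 5 + u 0 * v 2 - u 2 * v 0 - u 1 * v 3 + u 3 * v 1 := by
  simp [cross7, phi0, triForm, Pi.single_apply]; ring
lemma cross7_apply_5 (u v : Fin 7 → ℝ) : cross7 u v 5 = - u 4 * v 6 + u 6 * v 4 - u 1 * v 2 + u 2 * v 1 - u 0 * v 3 + u 3 * v 0 := by
  simp [cross7, phi0, triForm, Pi.single_apply]; ring
lemma cross7_apply_6 (u v : Fin 7 → ℝ) : cross7 u v 6 = u 0 * v 1 - u 1 * v 0 + u 2 * v 3 - u 3 * v 2 + u 4 * v 5 - u 5 * v 4 := by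
  simp [cross7, phi0, triForm, Pi.single_apply]; ring

lemma dot7_cross (a b z : Fin 7 → ℝ) : dot7 (cross7 a b) z = phi0 a b z := by
  simp only [dot7, Fin.sum_univ_seven, cross7_apply_0, cross7_apply_1, cross7_apply_2,
    cross7_apply_3, cross7_apply_4, cross7_apply_5, cross7_apply_6, phi0, triForm]
  ring

lemma L4 (a b d : Fin 7 → ℝ) :
    dot7 (cross7 a b) (cross7 b d) = dot7 a b * dot7 b d - dot7 b b * dot7 a d := by
  simp only [dot7, Fin.sum_univ_seven, cross7_apply_0, cross7_apply_1, cross7_apply_2,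
    cross7_apply_3, cross7_apply_4, cross7_apply_5, cross7_apply_6]
  ring

lemma dot7_single (a : Fin 7 → ℝ) (i : Fin 7) : dot7 a (Pi.single i 1) = a i := by
  fin_cases i <;>
    simp [dot7, Fin.sum_univ_seven, Pi.single_apply]

lemma L5 (a b z : Fin 7 → ℝ) :
    phi0 a (cross7 a b) z = dot7 a b * dot7 a z - dot7 a a * dot7 b z := by
  simp only [phi0, triForm, dot7, Fin.sum_univ_seven, cross7_apply_0, cross7_apply_1,
    cross7_apply_2, cross7_apply_3, cross7_apply_4, cross7_apply_5, cross7_apply_6]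
  ring

lemma L5' (a b z : Fin 7 → ℝ) :
    phi0 (cross7 a b) b z = dot7 a b * dot7 b z - dot7 b b * dot7 a z := by
  simp only [phi0, triForm, dot7, Fin.sum_univ_seven, cross7_apply_0, cross7_apply_1,
    cross7_apply_2, cross7_apply_3, cross7_apply_4, cross7_apply_5, cross7_apply_6]
  ring

lemma P5 (a b : Fin 7 → ℝ) :
    cross7 a (cross7 a b) = dot7 a b • a - dot7 a a • b := by
  funext i
  have h : cross7 a (cross7 a b) i = phi0 a (cross7 a b) (Pi.single i 1) := rfl
  rw [h, L5, dot7_single, dot7_single]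
  simp [Pi.smul_apply, smul_eq_mul]

lemma P5' (a b : Fin 7 → ℝ) :
    cross7 (cross7 a b) b = dot7 a b • b - dot7 b b • a := by
  funext i
  have h : cross7 (cross7 a b) b i = phi0 (cross7 a b) b (Pi.single i 1) := rfl
  rw [h, L5', dot7_single, dot7_single]
  simp [Pi.smul_apply, smul_eq_mul]
-- extra phi0 neg lemmas
lemma phi0_neg1 (a b d : Fin 7 → ℝ) : phi0 (-a) b d = -phi0 a b d := by
  simp only [phi0, triForm, Pi.neg_apply]; ring
lemma phi0_neg2 (a b d : Fin 7 → ℝ) : phi0 a (-b) d = -phi0 a b d := by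
  simp only [phi0, triForm, Pi.neg_apply]; ring
lemma phi0_self13 (a b : Fin 7 → ℝ) : phi0 a b a = 0 := by
  simp only [phi0, triForm]; ring
lemma phi0_neg_all (a b d : Fin 7 → ℝ) : phi0 (-a) (-b) (-d) = -phi0 a b d := by
  simp only [phi0, triForm, Pi.neg_apply]; ring

section withJ
variable (j : (Fin 7 → ℝ) →ₗ[ℝ] (Fin 7 → ℝ))

lemma T_third (hG2 : ∀ x y z, phi0 (j x) (j y) (j z) = phi0 x y z) {a b x : Fin 7 → ℝ} (ha : j a = a) (hb : j b = b) (hx : j x = -x) :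
    phi0 a b x = 0 := by
  have h := hG2 a b x
  rw [ha, hb, hx, phi0_neg3] at h
  linarith

lemma T_mid (hG2 : ∀ x y z, phi0 (j x) (j y) (j z) = phi0 x y z) {a b x : Fin 7 → ℝ} (ha : j a = a) (hb : j b = b) (hx : j x = -x) :
    phi0 a x b = 0 := by
  have h := hG2 a x b
  rw [ha, hb, hx, phi0_neg2] at h
  linarith

lemma T_first (hG2 : ∀ x y z, phi0 (j x) (j y) (j z) = phi0 x y z) {a b x : Fin 7 → ℝ} (ha : j a = a) (hb : j b = b) (hx : j x = -x) :
    phi0 x a b = 0 := by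
  have h := hG2 x a b
  rw [ha, hb, hx, phi0_neg1] at h
  linarith

lemma T_all (hG2 : ∀ x y z, phi0 (j x) (j y) (j z) = phi0 x y z) {x y z : Fin 7 → ℝ} (hx : j x = -x) (hy : j y = -y) (hz : j z = -z) :
    phi0 x y z = 0 := by
  have h := hG2 x y z
  rw [hx, hy, hz, phi0_neg_all] at h
  linarith

lemma core (hG2 : ∀ x y z, phi0 (j x) (j y) (j z) = phi0 x y z) (hsq : ∀ x, j (j x) = x)
    {a b d : Fin 7 → ℝ}
    (ha : j a = a) (hb : j b = b) (hd : j d = d)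
    (haa : dot7 a a = 1) (hbb : dot7 b b = 1)
    (hab : dot7 a b = 0) (had : dot7 a d = 0) (hbd : dot7 b d = 0)
    (hsp : ∀ z, j z = z → ∃ x y u : ℝ, z = x • a + y • b + u • d) :
    phi0 a b d ≠ 0 ∧ ∃ h, j h = -h ∧ phi0 a b d • cross7 a b = d + h := by
  set c := phi0 a b d with hc_def
  set w := cross7 a b with hw_def
  set f := (1/2 : ℝ) • (w + j w) with hf_def
  have hjf : j f = f := by
    rw [hf_def, map_smul, map_add, hsq]
    congr 1
    exact add_comm _ _
  obtain ⟨x, y, u, hf⟩ := hsp f hjf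
  have h2 : f + f = w + j w := by
    rw [hf_def, ← add_smul]; norm_num
  have hgg : j (w - f) = -(w - f) := by
    rw [map_sub, hjf, neg_sub, sub_eq_sub_iff_add_eq_add, h2]
    exact add_comm _ _
  have key : ∀ p q z : Fin 7 → ℝ, phi0 p z q = phi0 p (f + (z - f)) q := by
    intro p q z; rw [add_sub_cancel]
  -- e1 : u * c = 1
  have e1 : phi0 a w b = -1 := by
    rw [hw_def, L5, hab, hbb, haa]; ring
  have e1' : phi0 a f b = -1 := by
    rw [key a b w, phi0_add2, T_mid j hG2 ha hb hgg] at e1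
    linarith
  have e1'' : u * c = 1 := by
    rw [hf, phi0_add2, phi0_add2, phi0_smul2, phi0_smul2, phi0_smul2,
      phi0_self12, phi0_self23, phi0_swap23 a d b] at e1'
    rw [← hc_def] at e1'
    linarith
  have hc : c ≠ 0 := by
    intro h
    rw [h, mul_zero] at e1''
    exact zero_ne_one e1''
  -- e2 : y = 0
  have e2 : phi0 a w d = 0 := by
    rw [hw_def, L5, hab, haa, hbd]; ring
  have e2' : phi0 a f d = 0 := by
    rw [key a d w, phi0_add2, T_mid j hG2 ha hd hgg] at e2
    linarith
  have hy0 : y = 0 := by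
    rw [hf, phi0_add2, phi0_add2, phi0_smul2, phi0_smul2, phi0_smul2,
      phi0_self12, phi0_self23, ← hc_def] at e2'
    have : y * c = 0 := by linarith
    rcases mul_eq_zero.mp this with h | h
    · exact h
    · exact absurd h hc
  -- e3 : x = 0
  have e3 : phi0 w b d = 0 := by
    rw [hw_def, L5', hab, hbb, hbd, had]; ring
  have e3' : phi0 f b d = 0 := by
    have hsplit : phi0 w b d = phi0 (f + (w - f)) b d := by rw [add_sub_cancel]
    rw [hsplit, phi0_add1, T_first j hG2 hb hd hgg] at e3
    linarith
  have hx0 : x = 0 := by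
    rw [hf, phi0_add1, phi0_add1, phi0_smul1, phi0_smul1, phi0_smul1,
      phi0_self13 d b, ← hc_def] at e3'
    have hbbd : phi0 b b d = 0 := phi0_self12 b d
    rw [hbbd] at e3'
    have : x * c = 0 := by linarith
    rcases mul_eq_zero.mp this with h | h
    · exact h
    · exact absurd h hc
  -- conclude
  refine ⟨hc, c • (w - f), ?_, ?_⟩
  · rw [map_smul, hgg, smul_neg]
  · have hfu : f = u • d := by
      rw [hf, hx0, hy0]; simp
    have : c • w = c • f + c • (w - f) := by
      rw [← smul_add]; congr 1; abel
    rw [this, hfu, smul_smul, mul_comm c u, e1'', one_smul]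
end withJ

lemma P3 (a b : Fin 7 → ℝ) :
    dot7 (cross7 a b) (cross7 a b) = dot7 a a * dot7 b b - dot7 a b * dot7 a b := by
  simp only [dot7, Fin.sum_univ_seven, cross7_apply_0, cross7_apply_1, cross7_apply_2,
    cross7_apply_3, cross7_apply_4, cross7_apply_5, cross7_apply_6]
  ring

lemma dot7_expand2 (p x q y : Fin 7 → ℝ) :
    dot7 (p + x) (q + y) = dot7 p q + dot7 p y + dot7 x q + dot7 x y := by
  rw [dot7_add_left, dot7_add_right, dot7_add_right]; ring

lemma dot7_expand3 (r1 r2 r3 : ℝ) (u1 u2 u3 : Fin 7 → ℝ) :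
    dot7 (r1•u1 + r2•u2 + r3•u3) (r1•u1 + r2•u2 + r3•u3) =
      r1*r1*dot7 u1 u1 + r2*r2*dot7 u2 u2 + r3*r3*dot7 u3 u3
      + 2*(r1*r2)*dot7 u1 u2 + 2*(r1*r3)*dot7 u1 u3 + 2*(r2*r3)*dot7 u2 u3 := by
  simp only [dot7_add_left, dot7_add_right, dot7_smul_left, dot7_smul_right]
  rw [dot7_comm u2 u1, dot7_comm u3 u1, dot7_comm u3 u2]; ring


set_option maxHeartbeats 2000000 in
/-- For an involution `j ∈ G₂`, `j ≠ Id`, whose `+1`-eigenspace `V₁` has dimension 3,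
any orthonormal basis `(v₁,v₂,v₃)` of `V₁` satisfies `v₁ × v₂ = ±v₃` and
`φ₀(v₁,v₂,v₃) = ±1`. -/
theorem g2_involution_fixed_basis
    (j : (Fin 7 → ℝ) →ₗ[ℝ] (Fin 7 → ℝ))
    (hG2 : ∀ x y z, phi0 (j x) (j y) (j z) = phi0 x y z)
    (hsq : ∀ x, j (j x) = x) (hne : j ≠ LinearMap.id)
    (v : Fin 3 → Fin 7 → ℝ)
    (hfix : ∀ i, j (v i) = v i)
    (horth : ∀ i k, dot7 (v i) (v k) = if i = k then 1 else 0)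
    (hspan : Submodule.span ℝ (Set.range v) = Module.End.eigenspace j 1)
    (hdim : Module.finrank ℝ (Module.End.eigenspace j 1) = 3) :
    (cross7 (v 0) (v 1) = v 2 ∨ cross7 (v 0) (v 1) = -v 2) ∧
    (phi0 (v 0) (v 1) (v 2) = 1 ∨ phi0 (v 0) (v 1) (v 2) = -1) := by
  -- orthonormality values
  have d00 : dot7 (v 0) (v 0) = 1 := by simpa using horth 0 0
  have d11 : dot7 (v 1) (v 1) = 1 := by simpa using horth 1 1
  have d22 : dot7 (v 2) (v 2) = 1 := by simpa using horth 2 2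
  have d01 : dot7 (v 0) (v 1) = 0 := by simpa using horth 0 1
  have d02 : dot7 (v 0) (v 2) = 0 := by simpa using horth 0 2
  have d12 : dot7 (v 1) (v 2) = 0 := by simpa using horth 1 2
  have d10 : dot7 (v 1) (v 0) = 0 := by rw [dot7_comm]; exact d01
  have d20 : dot7 (v 2) (v 0) = 0 := by rw [dot7_comm]; exact d02
  have d21 : dot7 (v 2) (v 1) = 0 := by rw [dot7_comm]; exact d12
  -- span instances
  have hsp012 : ∀ z, j z = z → ∃ x y u : ℝ, z = x • v 0 + y • v 1 + u • v 2 := by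
    intro z hz
    have hz' : z ∈ Module.End.eigenspace j 1 := by
      rw [Module.End.mem_eigenspace_iff, one_smul]; exact hz
    rw [← hspan, Submodule.mem_span_range_iff_exists_fun] at hz'
    obtain ⟨coef, hcoef⟩ := hz'
    refine ⟨coef 0, coef 1, coef 2, ?_⟩
    rw [← hcoef, Fin.sum_univ_three]
  have hsp120 : ∀ z, j z = z → ∃ x y u : ℝ, z = x • v 1 + y • v 2 + u • v 0 := by
    intro z hz
    obtain ⟨x, y, u, hzz⟩ := hsp012 z hz
    exact ⟨y, u, x, by rw [hzz]; abel⟩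
  have hsp201 : ∀ z, j z = z → ∃ x y u : ℝ, z = x • v 2 + y • v 0 + u • v 1 := by
    intro z hz
    obtain ⟨x, y, u, hzz⟩ := hsp012 z hz
    exact ⟨u, x, y, by rw [hzz]; abel⟩
  -- cyclic values of c
  have hcyc1 : phi0 (v 1) (v 2) (v 0) = phi0 (v 0) (v 1) (v 2) := (phi0_cyc _ _ _).symm
  have hcyc2 : phi0 (v 2) (v 0) (v 1) = phi0 (v 0) (v 1) (v 2) := by
    rw [← phi0_cyc, ← phi0_cyc]
  -- core applications
  obtain ⟨hc, h, hjh, hw⟩ := core j hG2 hsq (hfix 0) (hfix 1) (hfix 2)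
    d00 d11 d01 d02 d12 hsp012
  obtain ⟨hc', h', hjh', hw'⟩ := core j hG2 hsq (hfix 1) (hfix 2) (hfix 0)
    d11 d22 d12 d10 d20 hsp120
  obtain ⟨hc'', h'', hjh'', hw''⟩ := core j hG2 hsq (hfix 2) (hfix 0) (hfix 1)
    d22 d00 d20 d21 d01 hsp201
  rw [hcyc1] at hw'
  rw [hcyc2] at hw''
  set c := phi0 (v 0) (v 1) (v 2) with hc_def
  -- vanishing of c•w against the (-1)-eigenvectors
  have hwm : ∀ x, j x = -x → dot7 (v 2 + h) x = 0 := by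
    intro x hx
    rw [← hw, dot7_smul_left, dot7_cross, T_third j hG2 (hfix 0) (hfix 1) hx, mul_zero]
  have hwm' : ∀ x, j x = -x → dot7 (v 0 + h') x = 0 := by
    intro x hx
    rw [← hw', dot7_smul_left, dot7_cross, T_third j hG2 (hfix 1) (hfix 2) hx, mul_zero]
  have hwm'' : ∀ x, j x = -x → dot7 (v 1 + h'') x = 0 := by
    intro x hx
    rw [← hw'', dot7_smul_left, dot7_cross, T_third j hG2 (hfix 2) (hfix 0) hx, mul_zero]
  -- mixed equations
  have m11 := hwm h hjh
  have m12 := hwm h' hjh'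
  have m13 := hwm h'' hjh''
  have m21 := hwm' h hjh
  have m22 := hwm' h' hjh'
  have m23 := hwm' h'' hjh''
  have m31 := hwm'' h hjh
  have m32 := hwm'' h' hjh'
  have m33 := hwm'' h'' hjh''
  rw [dot7_add_left] at m11 m12 m13 m21 m22 m23 m31 m32 m33
  -- norm / cross equations
  have n1 : dot7 (v 2 + h) (v 2 + h) = c * c := by
    rw [← hw, dot7_smul_left, dot7_smul_right, P3, d00, d11, d01]; ring
  have n2 : dot7 (v 0 + h') (v 0 + h') = c * c := by
    rw [← hw', dot7_smul_left, dot7_smul_right, P3, d11, d22, d12]; ring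
  have n3 : dot7 (v 1 + h'') (v 1 + h'') = c * c := by
    rw [← hw'', dot7_smul_left, dot7_smul_right, P3, d22, d00, d20]; ring
  have n12 : dot7 (v 2 + h) (v 0 + h') = 0 := by
    rw [← hw, ← hw', dot7_smul_left, dot7_smul_right, L4, d01, d12, d11, d02]; ring
  have n23 : dot7 (v 0 + h') (v 1 + h'') = 0 := by
    rw [← hw', ← hw'', dot7_smul_left, dot7_smul_right, L4, d12, d20, d22, d10]; ring
  have n31 : dot7 (v 1 + h'') (v 2 + h) = 0 := by
    rw [← hw'', ← hw, dot7_smul_left, dot7_smul_right, L4, d20, d01, d00, d21]; ring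
  rw [dot7_expand2] at n1 n2 n3 n12 n23 n31
  -- symmetry facts for the linear solver
  have c1 := dot7_comm h (v 2)
  have c2 := dot7_comm h' (v 0)
  have c3 := dot7_comm h'' (v 1)
  have c4 := dot7_comm h' h
  have c5 := dot7_comm h'' h'
  have c6 := dot7_comm h h''
  have c7 := dot7_comm h (v 0)
  have c8 := dot7_comm h' (v 1)
  have c9 := dot7_comm h'' (v 2)
  -- the database
  have thh : dot7 h h = 1 - c * c := by rw [d22] at n1; linarith
  have thh' : dot7 h' h' = 1 - c * c := by rw [d00] at n2; linarith
  have thh'' : dot7 h'' h'' = 1 - c * c := by rw [d11] at n3; linarith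
  have q2h : dot7 (v 2) h = -(1 - c * c) := by linarith
  have q0h' : dot7 (v 0) h' = -(1 - c * c) := by linarith
  have q1h'' : dot7 (v 1) h'' = -(1 - c * c) := by linarith
  have phh' : dot7 h h' = 0 := by rw [d20] at n12; linarith
  have phh'' : dot7 h' h'' = 0 := by rw [d01] at n23; linarith
  have phh''' : dot7 h'' h = 0 := by rw [d12] at n31; linarith
  have q2h' : dot7 (v 2) h' = 0 := by linarith
  have q0h : dot7 (v 0) h = 0 := by linarith
  have q0h'' : dot7 (v 0) h'' = 0 := by linarith
  have q1h' : dot7 (v 1) h' = 0 := by linarith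
  have q1h : dot7 (v 1) h = 0 := by linarith
  have q2h'' : dot7 (v 2) h'' = 0 := by linarith
  -- vector relations
  have A2 : cross7 (v 0) (cross7 (v 0) (v 1)) = -v 1 := by
    rw [P5, d01, d00, zero_smul, one_smul, zero_sub]
  have A1 : cross7 (v 0) (v 2 + h) = c • (-v 1) := by
    rw [← hw, cross7_smul_right, A2]
  have A4 : c • cross7 (v 0) (v 2) = -(v 1 + h'') := by
    rw [cross7_anticomm (v 0) (v 2), smul_neg, hw'']
  have eA : c • (cross7 (v 0) (v 2) + cross7 (v 0) h) = c • (c • (-v 1)) := by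
    rw [← cross7_add_right, A1]
  rw [smul_add, A4] at eA
  have R1 : c • cross7 (v 0) h = (1 - c*c) • v 1 + h'' := by
    linear_combination (norm := module) eA
  have B2 : cross7 (cross7 (v 0) (v 1)) (v 1) = -v 0 := by
    rw [P5', d01, d11, zero_smul, one_smul, zero_sub]
  have B1 : cross7 (v 2 + h) (v 1) = c • (-v 0) := by
    rw [← hw, cross7_smul_left, B2]
  have B4 : c • cross7 (v 2) (v 1) = -(v 0 + h') := by
    rw [cross7_anticomm (v 2) (v 1), smul_neg, hw']
  have eB : c • (cross7 (v 2) (v 1) + cross7 h (v 1)) = c • (c • (-v 0)) := by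
    rw [← cross7_add_left, B1]
  rw [smul_add, B4] at eB
  have R2' : c • cross7 h (v 1) = (1 - c*c) • v 0 + h' := by
    linear_combination (norm := module) eB
  have C2 : cross7 (cross7 (v 1) (v 2)) (v 2) = -v 1 := by
    rw [P5', d12, d22, zero_smul, one_smul, zero_sub]
  have C1 : cross7 (v 0 + h') (v 2) = c • (-v 1) := by
    rw [← hw', cross7_smul_left, C2]
  have eC : c • (cross7 (v 0) (v 2) + cross7 h' (v 2)) = c • (c • (-v 1)) := by
    rw [← cross7_add_left, C1]
  rw [smul_add, A4] at eC
  have R3' : c • cross7 h' (v 2) = (1 - c*c) • v 1 + h'' := by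
    linear_combination (norm := module) eC
  -- main vector identity
  have hXsplit : cross7 (v 2 + h) (v 0 + h') =
      cross7 (v 2) (v 0) + cross7 (v 2) h' + cross7 h (v 0) + cross7 h h' := by
    rw [cross7_add_left, cross7_add_right, cross7_add_right]; abel
  have hcv2h' : c • cross7 (v 2) h' = -((1 - c*c) • v 1 + h'') := by
    rw [cross7_anticomm (v 2) h', smul_neg, R3']
  have hchv0 : c • cross7 h (v 0) = -((1 - c*c) • v 1 + h'') := by
    rw [cross7_anticomm h (v 0), smul_neg, R1]
  have hY : c • cross7 (v 2 + h) (v 0 + h') =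
      (1 - 2*(1 - c*c)) • v 1 + (-1 : ℝ) • h'' + c • cross7 h h' := by
    rw [hXsplit, smul_add, smul_add, smul_add, hw'', hcv2h', hchv0]
    module
  -- scalar values for the final norm computation
  have nA : dot7 (v 2 + h) (v 2 + h) = c * c := by rw [dot7_expand2]; linarith
  have nB : dot7 (v 0 + h') (v 0 + h') = c * c := by rw [dot7_expand2]; linarith
  have nAB : dot7 (v 2 + h) (v 0 + h') = 0 := by rw [dot7_expand2]; linarith
  have N1 : dot7 (c • cross7 (v 2 + h) (v 0 + h')) (c • cross7 (v 2 + h) (v 0 + h'))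
      = c^6 := by
    rw [dot7_smul_left, dot7_smul_right, P3, nA, nB, nAB]; ring
  have hv1D : c * dot7 (v 1) (cross7 h h') = (1 - c*c)*(1 - c*c) - (1 - c*c) := by
    have s1 : dot7 (v 1) (cross7 h h') = -dot7 (cross7 h (v 1)) h' := by
      rw [dot7_comm, dot7_cross, dot7_cross, phi0_swap23]
    have s2 : dot7 (c • cross7 h (v 1)) h' = dot7 ((1 - c*c) • v 0 + h') h' := by
      rw [R2']
    rw [dot7_smul_left, dot7_add_left, dot7_smul_left, q0h', thh'] at s2
    rw [s1]
    linear_combination -s2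
  have hh''D : dot7 h'' (cross7 h h') = 0 := by
    rw [dot7_comm, dot7_cross]; exact T_all j hG2 hjh hjh' hjh''
  have hDD : dot7 (cross7 h h') (cross7 h h') = (1 - c*c)*(1 - c*c) := by
    rw [P3, thh, thh', phh']; ring
  have Nexp : dot7 (c • cross7 (v 2 + h) (v 0 + h')) (c • cross7 (v 2 + h) (v 0 + h'))
      = (1 - 2*(1 - c*c))*(1 - 2*(1 - c*c)) + (1 - c*c)
        + c*c*((1 - c*c)*(1 - c*c))
        + 2*((1 - 2*(1 - c*c))*(-1))*(-(1 - c*c))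
        + 2*((1 - 2*(1 - c*c))*c)*(dot7 (v 1) (cross7 h h'))
        + 2*((-1)*c)*0 := by
    rw [hY, dot7_expand3, d11, q1h'', thh'', hh''D, hDD]; ring
  have E : c^6 = (1 - 2*(1 - c*c))*(1 - 2*(1 - c*c)) + (1 - c*c)
        + c*c*((1 - c*c)*(1 - c*c))
        + 2*((1 - 2*(1 - c*c))*(-1))*(-(1 - c*c))
        + 2*((1 - 2*(1 - c*c))*c)*(dot7 (v 1) (cross7 h h'))
        + 2*((-1)*c)*0 := N1.symm.trans Nexp
  have hcc : (1 - c*c)*(1 - c*c)*(c*c) = 0 := by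
    linear_combination (-(1:ℝ)/4) * E - ((1 - 2*(1 - c*c))/2) * hv1D
  have ht0 : 1 - c*c = 0 := by
    rcases mul_eq_zero.mp hcc with h1 | h2
    · rcases mul_eq_zero.mp h1 with h3 | h3 <;> exact h3
    · exact absurd (mul_self_eq_zero.mp h2) hc
  have hc1 : c = 1 ∨ c = -1 := by
    have : (c - 1) * (c + 1) = 0 := by linear_combination -ht0
    rcases mul_eq_zero.mp this with h1 | h1
    · left; linarith
    · right; linarith
  have hhh0 : dot7 h h = 0 := by rw [thh]; linarith
  have h0 : h = 0 := eq_zero_of_dot7_self h hhh0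
  rw [h0, add_zero] at hw
  constructor
  · rcases hc1 with h1 | h1
    · left; rw [h1, one_smul] at hw; exact hw
    · right
      rw [h1, neg_smul, one_smul] at hw
      exact neg_eq_iff_eq_neg.mp hw
  · exact hc1
end
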